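/- arXiv:2501.11334 — 2 statements merged into one kernel-verified Lean document; each statement's English description precedes it below -/
import Mathlib

section
/- Let (S,+) be an infinite semigroup with no idempotent that is both left weakly cancellative and right cancellative, and let ⟨x_n⟩_{n=1}^∞ be a sequence in S. Then there exists a sum subsystem ⟨y_n⟩_{n=1}^∞ of ⟨x_n⟩_{n=1}^∞ satisfying uniqueness of finite sums, i.e. for all nonempty finite H₁, H₂ ⊆ ℕ with H₁ ≠ H₂ one has ∑_{n∈H₁} y_n ≠ ∑_{n∈H₂} y_n. -/
/-- Sum of `x` over the finite set `H ⊆ ℕ`, taken in increasing order of indices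
(with junk value `x 0` when `H = ∅`). -/
def ordSum {S : Type*} [Add S] (x : ℕ → S) (H : Finset ℕ) : S :=
  match H.sort (· ≤ ·) with
  | [] => x 0
  | h :: t => t.foldl (fun s n => s + x n) (x h)

/-!
The blocks `H_n` are chosen greedily. A finite sum involving `y_n` can collide with another one
only if `u + y_n = v` for sums `u, v` over earlier indices, possibly empty: if both sums contain
`y_n`, right cancellativity strips it, and `u + y_n = y_n` would make `u` idempotent. Left weak
cancellativity leaves only finitely many such values of `y_n`, while the partial sums
`x_m + ⋯ + x_{m+k}` beyond all earlier blocks are pairwise distinct: two equal ones give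
`a + t = a`, and then `{t | a + t = a}` is a finite subsemigroup, which contains an idempotent.
-/

open Finset

theorem exists_add_idempotent_of_finite {M : Type*} [AddSemigroup M] {s : Set M}
    (hne : s.Nonempty) (hfin : s.Finite) (hadd : ∀ x ∈ s, ∀ y ∈ s, x + y ∈ s) :
    ∃ m ∈ s, m + m = m := by
  let _ : TopologicalSpace M := ⊥
  have : DiscreteTopology M := ⟨rfl⟩
  exact exists_idempotent_in_compact_add_subsemigroup (fun _ => continuous_of_discreteTopology)
    s hne hfin.isCompact hadd

theorem Finset.sort_union_of_forall_lt {α : Type*} [LinearOrder α] {A B : Finset α}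
    (h : ∀ a ∈ A, ∀ b ∈ B, a < b) :
    (A ∪ B).sort (· ≤ ·) = A.sort (· ≤ ·) ++ B.sort (· ≤ ·) := by
  refine (sortedLT_sort _).eq_of_mem_iff ?_ (by simp)
  rw [List.sortedLT_iff_pairwise, List.pairwise_append]
  exact ⟨(sortedLT_sort A).pairwise, (sortedLT_sort B).pairwise,
    fun a ha b hb => h a (mem_sort _ |>.1 ha) b (mem_sort _ |>.1 hb)⟩

theorem exists_seq_forall_of_forall_exists {α : Type*} [Nonempty α]
    (P : ℕ → (ℕ → α) → α → Prop) (hloc : ∀ n f g, (∀ i < n, f i = g i) → P n f = P n g)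
    (hex : ∀ n f, ∃ a, P n f a) : ∃ f : ℕ → α, ∀ n, P n f (f n) := by
  classical
  let extend (n : ℕ) (g : ∀ m < n, α) : ℕ → α :=
    fun i => if h : i < n then g i h else Classical.arbitrary α
  let f : ℕ → α := Nat.strongRec fun n g => (hex n (extend n g)).choose
  refine ⟨f, fun n => ?_⟩
  have hf : f n = (hex n (extend n fun m _ => f m)).choose := Nat.strongRec_eq _ n
  rw [hf, hloc n f (extend n fun m _ => f m) (fun i hi => by simp [extend, hi])]
  exact (hex _ _).choose_spec

section Semigroup

variable {S : Type*} [AddSemigroup S]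

theorem add_ne_right_of_forall_add_ne_self (hrc : ∀ a b : S, {x : S | x + a = b}.Subsingleton)
    (hni : ∀ s : S, s + s ≠ s) (u s : S) : u + s ≠ s := fun h =>
  hni u (hrc s s (show u + u + s = s by rw [add_assoc, h, h]) h)

theorem add_ne_left_of_forall_add_ne_self (hlwc : ∀ a b : S, {x : S | a + x = b}.Finite)
    (hni : ∀ s : S, s + s ≠ s) (a t : S) : a + t ≠ a := fun h => by
  obtain ⟨m, -, hm⟩ := exists_add_idempotent_of_finite ⟨t, h⟩ (hlwc a a)
    fun x (hx : a + x = a) y (hy : a + y = a) => show a + (x + y) = a by rw [← add_assoc, hx, hy]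
  exact hni m hm

namespace WithZero

theorem eq_of_add_coe_eq_add_coe (hrc : ∀ a b : S, {x : S | x + a = b}.Subsingleton)
    (hni : ∀ s : S, s + s ≠ s) {u v : WithZero S} {s : S} (h : u + s = v + s) : u = v := by
  induction u using WithZero.recZeroCoe <;> induction v using WithZero.recZeroCoe
  · rfl
  · rw [zero_add, ← coe_add, coe_inj] at h
    exact absurd h.symm (add_ne_right_of_forall_add_ne_self hrc hni _ _)
  · rw [zero_add, ← coe_add, coe_inj] at h
    exact absurd h (add_ne_right_of_forall_add_ne_self hrc hni _ _)
  · rw [← coe_add, ← coe_add, coe_inj] at h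
    rw [hrc s _ h rfl]

theorem finite_setOf_add_coe_eq (hlwc : ∀ a b : S, {x : S | a + x = b}.Finite)
    (u v : WithZero S) : {s : S | u + s = v}.Finite := by
  induction u using WithZero.recZeroCoe with
  | zero => exact Set.Subsingleton.finite fun s (hs : 0 + ↑s = v) t (ht : 0 + ↑t = v) =>
      coe_inj.1 (by rw [← zero_add (s : WithZero S), hs, ← ht, zero_add])
  | coe a =>
    induction v using WithZero.recZeroCoe with
    | zero => simp [← coe_add]
    | coe b => simpa [← coe_add] using hlwc a b

end WithZero

/-- The empty sum is the adjoined zero, so `ordSum₀_union` needs no nonemptiness side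
conditions. -/
def ordSum₀ (x : ℕ → S) (H : Finset ℕ) : WithZero S :=
  ((H.sort (· ≤ ·)).map fun n => (x n : WithZero S)).sum

theorem ordSum₀_union (x : ℕ → S) {A B : Finset ℕ} (h : ∀ a ∈ A, ∀ b ∈ B, a < b) :
    ordSum₀ x (A ∪ B) = ordSum₀ x A + ordSum₀ x B := by
  rw [ordSum₀, sort_union_of_forall_lt h, List.map_append, List.sum_append, ordSum₀, ordSum₀]

@[simp]
theorem ordSum₀_singleton (x : ℕ → S) (n : ℕ) : ordSum₀ x {n} = x n := by
  simp [ordSum₀]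

theorem ordSum₀_congr {x x' : ℕ → S} {H : Finset ℕ} (h : ∀ i ∈ H, x i = x' i) :
    ordSum₀ x H = ordSum₀ x' H := by
  rw [ordSum₀, ordSum₀, List.map_congr_left fun i hi => by rw [h i ((mem_sort _).1 hi)]]

theorem coe_foldl_add (x : ℕ → S) (t : List ℕ) (a : S) :
    ((t.foldl (fun s n => s + x n) a : S) : WithZero S) =
      a + (t.map fun n => (x n : WithZero S)).sum := by
  induction t generalizing a with
  | nil => simp
  | cons n t ih => simp [ih, WithZero.coe_add, add_assoc]

theorem coe_ordSum (x : ℕ → S) {H : Finset ℕ} (hH : H.Nonempty) :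
    ((ordSum x H : S) : WithZero S) = ordSum₀ x H := by
  obtain ⟨h, t, ht⟩ := List.exists_cons_of_ne_nil (l := H.sort (· ≤ ·))
    (by simpa [← List.length_pos_iff, length_sort] using hH.card_pos)
  rw [ordSum, ordSum₀, ht]
  simp [coe_foldl_add]

theorem ordSum_union (x : ℕ → S) {A B : Finset ℕ} (hA : A.Nonempty) (hB : B.Nonempty)
    (h : ∀ a ∈ A, ∀ b ∈ B, a < b) : ordSum x (A ∪ B) = ordSum x A + ordSum x B := by
  rw [← WithZero.coe_inj, WithZero.coe_add, coe_ordSum x (hA.mono subset_union_left),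
    coe_ordSum x hA, coe_ordSum x hB, ordSum₀_union x h]

def collisionSet (y : ℕ → S) (n : ℕ) : Set S :=
  {s | ∃ K ⊆ range n, ∃ L ⊆ range n, ordSum₀ y K + s = ordSum₀ y L}

theorem collisionSet_finite (hlwc : ∀ a b : S, {x : S | a + x = b}.Finite) (y : ℕ → S) (n : ℕ) :
    (collisionSet y n).Finite := by
  refine ((range n).powerset.finite_toSet.biUnion fun K _ =>
    (range n).powerset.finite_toSet.biUnion fun L _ =>
      WithZero.finite_setOf_add_coe_eq hlwc (ordSum₀ y K) (ordSum₀ y L)).subset ?_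
  rintro s ⟨K, hK, L, hL, h⟩
  exact Set.mem_biUnion (mem_powerset.2 hK) (Set.mem_biUnion (mem_powerset.2 hL) h)

theorem collisionSet_congr {y y' : ℕ → S} {n : ℕ} (h : ∀ i < n, y i = y' i) :
    collisionSet y n = collisionSet y' n := by
  have hsum : ∀ K ⊆ range n, ordSum₀ y K = ordSum₀ y' K := fun K hK =>
    ordSum₀_congr fun i hi => h i (mem_range.1 (hK hi))
  ext s
  constructor <;> rintro ⟨K, hK, L, hL, hs⟩
  · exact ⟨K, hK, L, hL, by rwa [← hsum K hK, ← hsum L hL]⟩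
  · exact ⟨K, hK, L, hL, by rwa [hsum K hK, hsum L hL]⟩

theorem ordSum₀_eq_erase_add (y : ℕ → S) {n : ℕ} {H : Finset ℕ} (hH : H ⊆ range (n + 1))
    (hn : n ∈ H) : ordSum₀ y H = ordSum₀ y (H.erase n) + y n := by
  have hlt : ∀ a ∈ H.erase n, a < n := fun a ha =>
    (mem_range_succ_iff.1 (hH (mem_of_mem_erase ha))).lt_of_ne (ne_of_mem_erase ha)
  conv_lhs => rw [← insert_erase hn, insert_eq, union_comm]
  rw [ordSum₀_union y fun a ha b hb => mem_singleton.1 hb ▸ hlt a ha, ordSum₀_singleton]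

theorem ordSum₀_injOn_subset_range (hrc : ∀ a b : S, {x : S | x + a = b}.Subsingleton)
    (hni : ∀ s : S, s + s ≠ s) {y : ℕ → S} (hy : ∀ n, y n ∉ collisionSet y n) (n : ℕ) :
    Set.InjOn (ordSum₀ y) {H | H ⊆ range n} := by
  induction n with
  | zero => simp
  | succ n ih =>
    have hsub : ∀ H ⊆ range (n + 1), H.erase n ⊆ range n := fun H hH =>
      subset_insert_iff.1 (range_add_one ▸ hH)
    intro H₁ h₁ H₂ h₂ heq
    by_cases e₁ : n ∈ H₁ <;> by_cases e₂ : n ∈ H₂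
    · rw [ordSum₀_eq_erase_add y h₁ e₁, ordSum₀_eq_erase_add y h₂ e₂] at heq
      have := ih (hsub H₁ h₁) (hsub H₂ h₂)
        (WithZero.eq_of_add_coe_eq_add_coe hrc hni heq)
      rw [← insert_erase e₁, ← insert_erase e₂, this]
    · rw [ordSum₀_eq_erase_add y h₁ e₁] at heq
      exact absurd ⟨_, hsub H₁ h₁, H₂, erase_eq_of_notMem e₂ ▸ hsub H₂ h₂, heq⟩ (hy n)
    · rw [ordSum₀_eq_erase_add y h₂ e₂] at heq
      exact absurd ⟨_, hsub H₂ h₂, H₁, erase_eq_of_notMem e₁ ▸ hsub H₁ h₁, heq.symm⟩ (hy n)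
    · rw [← erase_eq_of_notMem e₁, ← erase_eq_of_notMem e₂] at heq ⊢
      exact ih (hsub H₁ h₁) (hsub H₂ h₂) heq

theorem eq_of_ordSum_eq_of_forall_notMem_collisionSet (hrc : ∀ a b : S, {x : S | x + a = b}.Subsingleton)
    (hni : ∀ s : S, s + s ≠ s) {y : ℕ → S} (hy : ∀ n, y n ∉ collisionSet y n)
    {H₁ H₂ : Finset ℕ} (h₁ : H₁.Nonempty) (h₂ : H₂.Nonempty) (heq : ordSum y H₁ = ordSum y H₂) :
    H₁ = H₂ := by
  obtain ⟨n, hn⟩ := (H₁ ∪ H₂).exists_nat_subset_range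
  refine ordSum₀_injOn_subset_range hrc hni hy n (subset_union_left.trans hn)
    (subset_union_right.trans hn) ?_
  rw [← coe_ordSum y h₁, ← coe_ordSum y h₂, heq]

theorem ordSum_Icc_injective (hlwc : ∀ a b : S, {x : S | a + x = b}.Finite)
    (hni : ∀ s : S, s + s ≠ s) (x : ℕ → S) (m : ℕ) :
    Function.Injective fun k => ordSum x (Icc m (m + k)) := by
  refine Function.Injective.of_lt_imp_ne fun j k hjk heq => ?_
  have hsplit : Icc m (m + k) = Icc m (m + j) ∪ Ioc (m + j) (m + k) := by
    ext a; simp only [mem_union, mem_Icc, mem_Ioc]; omega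
  rw [hsplit, ordSum_union x ⟨m, by simp⟩ ⟨m + k, by simp [hjk]⟩
    fun a ha b hb => (mem_Icc.1 ha).2.trans_lt (mem_Ioc.1 hb).1] at heq
  exact add_ne_left_of_forall_add_ne_self hlwc hni _ _ heq.symm

theorem exists_ordSum_notMem (hlwc : ∀ a b : S, {x : S | a + x = b}.Finite)
    (hni : ∀ s : S, s + s ≠ s) (x : ℕ → S) {B : Set S} (hB : B.Finite) (m : ℕ) :
    ∃ H : Finset ℕ, H.Nonempty ∧ (∀ a ∈ H, m ≤ a) ∧ ordSum x H ∉ B := by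
  obtain ⟨k, hk⟩ := (hB.preimage (ordSum_Icc_injective hlwc hni x m).injOn).exists_notMem
  exact ⟨Icc m (m + k), ⟨m, by simp⟩, fun a ha => (mem_Icc.1 ha).1, hk⟩

theorem exists_blocks_forall_notMem_collisionSet (hlwc : ∀ a b : S, {x : S | a + x = b}.Finite)
    (hni : ∀ s : S, s + s ≠ s) (x : ℕ → S) :
    ∃ Hs : ℕ → Finset ℕ, ∀ n, (Hs n).Nonempty ∧ (∀ i < n, ∀ a ∈ Hs i, ∀ b ∈ Hs n, a < b) ∧
      ordSum x (Hs n) ∉ collisionSet (fun i => ordSum x (Hs i)) n := by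
  refine exists_seq_forall_of_forall_exists
    (fun n Hs H => H.Nonempty ∧ (∀ i < n, ∀ a ∈ Hs i, ∀ b ∈ H, a < b) ∧
      ordSum x H ∉ collisionSet (fun i => ordSum x (Hs i)) n) ?_ ?_
  · intro n Hs Hs' h
    ext H
    rw [collisionSet_congr fun i hi => by rw [h i hi]]
    exact and_congr_right' (and_congr_left' (forall₂_congr fun i hi => by rw [h i hi]))
  · intro n Hs
    obtain ⟨H, hne, hge, hH⟩ := exists_ordSum_notMem hlwc hni x
      (collisionSet_finite hlwc (fun i => ordSum x (Hs i)) n)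
      ((range n).sup (fun i => (Hs i).sup id) + 1)
    refine ⟨H, hne, fun i hi a ha b hb => ?_, hH⟩
    have : a ≤ (range n).sup fun i => (Hs i).sup id :=
      (le_sup (f := id) ha).trans (le_sup (f := fun i => (Hs i).sup id) (mem_range.2 hi))
    exact this.trans_lt (hge b hb)

end Semigroup

theorem stmt2_general {S : Type*} [AddSemigroup S]
    (hlwc : ∀ a b : S, {x : S | a + x = b}.Finite)
    (hrc : ∀ a b : S, {x : S | x + a = b}.Subsingleton)
    (hni : ∀ s : S, s + s ≠ s)
    (x : ℕ → S) :
    ∃ (y : ℕ → S) (Hs : ℕ → Finset ℕ),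
      -- `⟨y_n⟩` is a sum subsystem of `⟨x_n⟩`:
      (∀ n, (Hs n).Nonempty) ∧
      (∀ n, ∀ a ∈ Hs n, ∀ b ∈ Hs (n + 1), a < b) ∧
      (∀ n, y n = ordSum x (Hs n)) ∧
      -- `⟨y_n⟩` satisfies uniqueness of finite sums:
      (∀ H₁ H₂ : Finset ℕ, H₁.Nonempty → H₂.Nonempty →
        H₁ ≠ H₂ → ordSum y H₁ ≠ ordSum y H₂) := by
  obtain ⟨Hs, hHs⟩ := exists_blocks_forall_notMem_collisionSet hlwc hni x
  refine ⟨fun n => ordSum x (Hs n), Hs, fun n => (hHs n).1,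
    fun n => (hHs (n + 1)).2.1 n n.lt_succ_self, fun n => rfl, ?_⟩
  intro H₁ H₂ h₁ h₂ hne heq
  exact hne (eq_of_ordSum_eq_of_forall_notMem_collisionSet hrc hni (fun n => (hHs n).2.2) h₁ h₂ heq)

/-- If `(S,+)` is an infinite left weakly cancellative and right
cancellative semigroup with no idempotent and `⟨x_n⟩` is a sequence in `S`, then there is
a sum subsystem `⟨y_n⟩` of `⟨x_n⟩` satisfying uniqueness of finite sums. -/
theorem stmt2 {S : Type*} [AddSemigroup S] [Infinite S]
    (hlwc : ∀ a b : S, {x : S | a + x = b}.Finite)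
    (hrc : ∀ a b : S, {x : S | x + a = b}.Subsingleton)
    (hni : ∀ s : S, s + s ≠ s)
    (x : ℕ → S) :
    ∃ (y : ℕ → S) (Hs : ℕ → Finset ℕ),
      -- `⟨y_n⟩` is a sum subsystem of `⟨x_n⟩`:
      (∀ n, (Hs n).Nonempty) ∧
      (∀ n, ∀ a ∈ Hs n, ∀ b ∈ Hs (n + 1), a < b) ∧
      (∀ n, y n = ordSum x (Hs n)) ∧
      -- `⟨y_n⟩` satisfies uniqueness of finite sums:
      (∀ H₁ H₂ : Finset ℕ, H₁.Nonempty → H₂.Nonempty →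
        H₁ ≠ H₂ → ordSum y H₁ ≠ ordSum y H₂) :=
  stmt2_general hlwc hrc hni x
end

section
/- Let (S,+) be an infinite left weakly cancellative semigroup with no idempotent, and let A be an IP set in S. Then there is a family ⟨A_α⟩_{α < 2^{ℵ₀}} of 2^{ℵ₀} subsets of A such that each A_α is a countably infinite IP set in S and A_α ∩ A_β is finite whenever α ≠ β. -/
/-- `FS(⟨x_n⟩) = {∑_{n ∈ H} x_n : H a nonempty finite subset of ℕ}`,
sums in increasing order of indices. -/
def FS {S : Type*} [Add S] (x : ℕ → S) : Set S :=
  {s | ∃ H : Finset ℕ, H.Nonempty ∧ s = ordSum x H}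

/-- `A` is an IP set if `FS(⟨x_n⟩) ⊆ A` for some sequence `⟨x_n⟩` in `S`. -/
def IPSet {S : Type*} [Add S] (A : Set S) : Prop :=
  ∃ x : ℕ → S, FS x ⊆ A

open Filter Function

attribute [local instance] Ultrafilter.add Ultrafilter.addSemigroup

@[elab_as_elim]
lemma Finset.Nonempty.induction_on_min {α : Type*} [LinearOrder α]
    {motive : ∀ s : Finset α, s.Nonempty → Prop}
    (singleton : ∀ a, motive {a} (singleton_nonempty a))
    (insert : ∀ a s (hs : s.Nonempty), (∀ x ∈ s, a < x) → motive s hs →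
      motive (insert a s) (insert_nonempty a s)) {s : Finset α} (hs : s.Nonempty) :
    motive s hs := by
  induction s using Finset.induction_on_min with
  | empty => exact absurd hs Finset.not_nonempty_empty
  | insert a s ha ih =>
    rcases s.eq_empty_or_nonempty with rfl | hne
    · exact singleton a
    · exact insert a s hne ha (ih hne)

section OrdSum

variable {S : Type*} [AddSemigroup S] (x : ℕ → S)

lemma ordSum_singleton (n : ℕ) : ordSum x {n} = x n := by
  simp [ordSum]

lemma ordSum_insert_of_forall_lt {n : ℕ} {H : Finset ℕ} (hH : H.Nonempty)
    (hn : ∀ m ∈ H, n < m) : ordSum x (insert n H) = x n + ordSum x H := by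
  have foldl_add (a b : S) (l : List ℕ) :
      l.foldl (fun s k => s + x k) (a + b) = a + l.foldl (fun s k => s + x k) b := by
    induction l generalizing b with
    | nil => rfl
    | cons k l ih => simpa only [List.foldl_cons, add_assoc] using ih (b + x k)
  obtain ⟨h, t, ht⟩ := List.exists_cons_of_ne_nil (l := H.sort (· ≤ ·)) (by
    rw [Ne, ← List.length_eq_zero_iff, Finset.length_sort, Finset.card_eq_zero]
    exact hH.ne_empty)
  rw [ordSum, Finset.sort_insert _ (fun m hm => (hn m hm).le) (fun h => lt_irrefl n (hn n h)),
    ht]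
  dsimp only
  rw [List.foldl_cons, foldl_add, ordSum, ht]

lemma ordSum_insert_of_forall_gt {n : ℕ} {H : Finset ℕ} (hH : H.Nonempty)
    (hn : ∀ m ∈ H, m < n) : ordSum x (insert n H) = ordSum x H + x n := by
  induction hH using Finset.Nonempty.induction_on_min with
  | singleton a =>
    have ha : a < n := hn a (Finset.mem_singleton_self a)
    rw [Finset.pair_comm, ordSum_insert_of_forall_lt x (Finset.singleton_nonempty n) (by simpa),
      ordSum_singleton, ordSum_singleton]
  | insert a H hH ha ih =>
    have hH' : ∀ m ∈ insert n H, a < m :=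
      Finset.forall_mem_insert .. |>.2 ⟨hn a (Finset.mem_insert_self a H), ha⟩
    rw [Finset.insert_comm, ordSum_insert_of_forall_lt x (Finset.insert_nonempty n H) hH',
      ih fun m hm => hn m (Finset.mem_insert_of_mem hm), ordSum_insert_of_forall_lt x hH ha,
      add_assoc]

lemma ordSum_comp_of_strictMono {g : ℕ → ℕ} (hg : StrictMono g) {H : Finset ℕ}
    (hH : H.Nonempty) : ordSum (x ∘ g) H = ordSum x (H.image g) := by
  induction hH using Finset.Nonempty.induction_on_min with
  | singleton a => simp [ordSum_singleton]
  | insert a H hH ha ih =>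
    rw [Finset.image_insert, ordSum_insert_of_forall_lt _ hH ha, ih,
      ordSum_insert_of_forall_lt x (hH.image g) (by simpa using fun m hm => hg (ha m hm)),
      comp_apply]

end OrdSum

section FS

variable {S : Type*} [AddSemigroup S] (x : ℕ → S)

lemma FS_comp_subset_of_strictMono {g : ℕ → ℕ} (hg : StrictMono g) : FS (x ∘ g) ⊆ FS x := by
  rintro _ ⟨H, hH, rfl⟩
  exact ⟨H.image g, hH.image g, ordSum_comp_of_strictMono x hg hH⟩

lemma FS_countable : (FS x).Countable :=
  (Set.countable_range (ordSum x)).mono <| by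
    rintro _ ⟨H, -, rfl⟩
    exact ⟨H, rfl⟩

lemma FS_infinite_of_injective (hx : Injective x) : (FS x).Infinite :=
  (Set.infinite_range_of_injective hx).mono <| by
    rintro _ ⟨n, rfl⟩
    exact ⟨{n}, Finset.singleton_nonempty n, (ordSum_singleton x n).symm⟩

lemma exists_ordSum_of_mem_hindmanFS_drop {a : Stream' S} {m : S} (hm : m ∈ Hindman.FS a) :
    ∀ k, a = Stream'.drop k x → ∃ H : Finset ℕ, H.Nonempty ∧ (∀ i ∈ H, k ≤ i) ∧ ordSum x H = m := by
  induction hm with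
  | head' a =>
    rintro k rfl
    exact ⟨{k}, Finset.singleton_nonempty k, by simp,
      (ordSum_singleton x k).trans (Stream'.head_drop x k).symm⟩
  | tail' a m _ ih =>
    rintro k rfl
    obtain ⟨H, hH, hk, rfl⟩ := ih (k + 1) Stream'.tail_drop'
    exact ⟨H, hH, fun i hi => Nat.le_of_succ_le (hk i hi), rfl⟩
  | cons' a m _ ih =>
    rintro k rfl
    obtain ⟨H, hH, hk, rfl⟩ := ih (k + 1) Stream'.tail_drop'
    refine ⟨insert k H, Finset.insert_nonempty k H, ?_, ?_⟩
    · simpa using fun i hi => Nat.le_of_succ_le (hk i hi)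
    · rw [ordSum_insert_of_forall_lt x hH hk, Stream'.head_drop x k]
      rfl

lemma hindmanFS_subset_FS : Hindman.FS (x : Stream' S) ⊆ FS x := fun _ hm =>
  let ⟨H, hH, _, hs⟩ := exists_ordSum_of_mem_hindmanFS_drop x hm 0 rfl
  ⟨H, hH, hs.symm⟩

end FS

section Ultrafilter

variable {S : Type*} [AddSemigroup S] {U : Ultrafilter S}

lemma Ultrafilter.infinite_of_mem_of_add_self (hU : U + U = U) (hni : ∀ s : S, s + s ≠ s)
    {B : Set S} (hB : B ∈ U) : B.Infinite := by
  intro hfin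
  obtain ⟨a, -, rfl⟩ := U.eq_pure_of_finite_mem hfin hB
  have h : ∀ᶠ m in (pure a + pure a : Ultrafilter S), m ∈ ({a} : Set S) := by
    rw [hU]
    exact Set.mem_singleton a
  rw [Ultrafilter.eventually_add] at h
  exact hni a h

/-- `C ⊆ C⋆` in the notation of Hindman–Strauss, where `C⋆ = {s ∈ C | -s + C ∈ U}`. -/
def IsStarSet (U : Ultrafilter S) (C : Set S) : Prop :=
  C ∈ U ∧ ∀ s ∈ C, (s + ·) ⁻¹' C ∈ U

lemma exists_isStarSet_subset (hU : U + U = U) {B : Set S} (hB : B ∈ U) :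
    ∃ C ⊆ B, IsStarSet U C := by
  have hstar : ∀ B ∈ U, {s | (s + ·) ⁻¹' B ∈ U} ∈ U := fun B hB => by
    rw [← hU] at hB
    exact Ultrafilter.eventually_add U U (· ∈ B) |>.1 hB
  refine ⟨B ∩ {s | (s + ·) ⁻¹' B ∈ U}, Set.inter_subset_left, inter_mem hB (hstar B hB), ?_⟩
  rintro s ⟨-, hs⟩
  have hs' : {t | (s + t + ·) ⁻¹' B ∈ U} ∈ U := by
    simpa only [Set.preimage_preimage, add_assoc] using hstar _ hs
  exact inter_mem hs hs'

lemma IsStarSet.inter_preimage {C : Set S} (hC : IsStarSet U C) {z : S} (hz : z ∈ C) :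
    IsStarSet U (C ∩ (z + ·) ⁻¹' C) := by
  refine ⟨inter_mem hC.1 (hC.2 z hz), fun s ⟨hsC, hzs⟩ => inter_mem (hC.2 s hsC) ?_⟩
  have h := hC.2 _ hzs
  simp only [add_assoc] at h
  exact h

end Ultrafilter

section SumsBelow

variable {S : Type*} [AddSemigroup S] (y : ℕ → S)

def sumsBelow (n : ℕ) : Set S := ordSum y '' {H | H.Nonempty ∧ H ⊆ Finset.range n}

lemma sumsBelow_finite (n : ℕ) : (sumsBelow y n).Finite :=
  ((Finset.range n).powerset.finite_toSet.subset fun _ hH => Finset.mem_powerset.2 hH.2).image _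

lemma ordSum_mem_insert_image_sumsBelow {n : ℕ} {G : Finset ℕ} (hn : n ∈ G)
    (hG : G ⊆ Finset.range (n + 1)) :
    ordSum y G ∈ insert (y n) ((· + y n) '' sumsBelow y n) := by
  have hlt : ∀ m ∈ G.erase n, m < n := fun m hm =>
    lt_of_le_of_ne (Nat.lt_succ_iff.1 (Finset.mem_range.1 (hG (Finset.mem_of_mem_erase hm))))
      (Finset.ne_of_mem_erase hm)
  rw [← Finset.insert_erase hn]
  rcases (G.erase n).eq_empty_or_nonempty with he | hne
  · rw [he, insert_empty_eq, ordSum_singleton]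
    exact Set.mem_insert _ _
  · rw [ordSum_insert_of_forall_gt y hne hlt]
    exact Set.mem_insert_of_mem _
      ⟨_, ⟨⟨_, ⟨hne, fun m hm => Finset.mem_range.2 (hlt m hm)⟩, rfl⟩, rfl⟩⟩

lemma sumsBelow_succ_subset (n : ℕ) :
    sumsBelow y (n + 1) ⊆ sumsBelow y n ∪ insert (y n) ((· + y n) '' sumsBelow y n) := by
  rintro _ ⟨H, ⟨hH, hHn⟩, rfl⟩
  by_cases hn : n ∈ H
  · exact Or.inr (ordSum_mem_insert_image_sumsBelow y hn hHn)
  · refine Or.inl ⟨H, ⟨hH, fun m hm => ?_⟩, rfl⟩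
    have := Finset.mem_range.1 (hHn hm)
    exact Finset.mem_range.2 (lt_of_le_of_ne (Nat.lt_succ_iff.1 this) (ne_of_mem_of_not_mem hm hn))

def OrdSumDeterminesMax : Prop :=
  ∀ (F G : Finset ℕ) (hF : F.Nonempty) (hG : G.Nonempty),
    ordSum y F = ordSum y G → F.max' hF = G.max' hG

lemma ordSumDeterminesMax_of_forall_notMem (hy : ∀ n, y n ∉ sumsBelow y n)
    (hy' : ∀ n, ∀ a ∈ sumsBelow y n, a + y n ∉ sumsBelow y n) : OrdSumDeterminesMax y := by
  suffices key : ∀ (F G : Finset ℕ) (hF : F.Nonempty) (hG : G.Nonempty),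
      F.max' hF < G.max' hG → ordSum y F ≠ ordSum y G by
    intro F G hF hG h
    by_contra hne
    rcases lt_or_gt_of_ne hne with hlt | hgt
    exacts [key F G hF hG hlt h, key G F hG hF hgt h.symm]
  intro F G hF hG hlt heq
  set n := G.max' hG
  have hFn : ordSum y F ∈ sumsBelow y n :=
    ⟨F, ⟨hF, fun i hi => Finset.mem_range.2 ((F.le_max' i hi).trans_lt hlt)⟩, rfl⟩
  rw [heq] at hFn
  rcases ordSum_mem_insert_image_sumsBelow y (G.max'_mem hG)
    (fun i hi => Finset.mem_range.2 (Nat.lt_succ_of_le (G.le_max' i hi))) with hGn | ⟨a, ha, hGn⟩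
  · exact hy n (hGn ▸ hFn)
  · exact hy' n a ha (by rwa [← hGn] at hFn)

end SumsBelow

namespace OrdSumDeterminesMax

variable {S : Type*} [AddSemigroup S] {y : ℕ → S}

lemma injective (hy : OrdSumDeterminesMax y) : Injective y := fun m n h => by
  simpa using hy {m} {n} (Finset.singleton_nonempty m) (Finset.singleton_nonempty n)
    (by rw [ordSum_singleton, ordSum_singleton, h])

lemma finite_FS_comp_inter (hy : OrdSumDeterminesMax y) {g h : ℕ → ℕ} (hg : StrictMono g)
    (hh : StrictMono h) (hgh : (Set.range g ∩ Set.range h).Finite) :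
    (FS (y ∘ g) ∩ FS (y ∘ h)).Finite := by
  obtain ⟨N, hN⟩ := hgh.bddAbove
  refine (sumsBelow_finite y (N + 1)).subset ?_
  rintro _ ⟨⟨F, hF, rfl⟩, G, hG, hFG⟩
  rw [ordSum_comp_of_strictMono y hg hF] at hFG ⊢
  rw [ordSum_comp_of_strictMono y hh hG] at hFG
  have hmax := hy _ _ (hF.image g) (hG.image h) hFG
  have hmax_mem : (F.image g).max' (hF.image g) ∈ Set.range g ∩ Set.range h := by
    obtain ⟨i, -, hi⟩ := Finset.mem_image.1 ((F.image g).max'_mem (hF.image g))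
    obtain ⟨j, -, hj⟩ := Finset.mem_image.1 ((G.image h).max'_mem (hG.image h))
    exact ⟨⟨i, hi⟩, ⟨j, hj.trans hmax.symm⟩⟩
  refine ⟨F.image g, ⟨hF.image g, fun i hi => Finset.mem_range.2 ?_⟩, rfl⟩
  exact Nat.lt_succ_of_le (((F.image g).le_max' i hi).trans (hN hmax_mem))

end OrdSumDeterminesMax

section Construction

variable {S : Type*} [AddSemigroup S]

lemma Set.Infinite.exists_mem_forall_add_notMem (hlwc : ∀ a b : S, {x : S | a + x = b}.Finite)
    {C : Set S} (hC : C.Infinite) (E : Finset S) :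
    ∃ z ∈ C, z ∉ E ∧ ∀ a ∈ E, a + z ∉ E := by
  have hbad : ((E : Set S) ∪ ⋃ a ∈ E, ⋃ e ∈ E, {t | a + t = e}).Finite :=
    E.finite_toSet.union <| E.finite_toSet.biUnion fun a _ =>
      E.finite_toSet.biUnion fun e _ => hlwc a e
  obtain ⟨z, hzC, hz⟩ := (hC.sdiff hbad).nonempty
  simp only [Set.mem_union, Finset.mem_coe, Set.mem_iUnion, Set.mem_ofPred_eq, not_or,
    not_exists] at hz
  exact ⟨z, hzC, hz.1, fun a ha hae => hz.2 a ha _ hae rfl⟩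

lemma FS_subset_of_mem_of_succ_subset {y : ℕ → S} {C : ℕ → Set S} (hy : ∀ n, y n ∈ C n)
    (hC : ∀ n, C (n + 1) ⊆ C n ∩ (y n + ·) ⁻¹' C n) : FS y ⊆ C 0 := by
  have hanti : Antitone C := antitone_nat_of_succ_le fun n => (hC n).trans Set.inter_subset_left
  suffices key : ∀ H (hH : H.Nonempty) n, (∀ i ∈ H, n ≤ i) → ordSum y H ∈ C n by
    rintro _ ⟨H, hH, rfl⟩
    exact key H hH 0 fun i _ => Nat.zero_le i
  intro H hH
  induction hH using Finset.Nonempty.induction_on_min with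
  | singleton a =>
    intro n hn
    rw [ordSum_singleton]
    exact hanti (hn a (Finset.mem_singleton_self a)) (hy a)
  | insert a H hH ha ih =>
    intro n hn
    rw [ordSum_insert_of_forall_lt y hH ha]
    have hsum : ordSum y H ∈ C (a + 1) := ih (a + 1) ha
    exact hanti (hn a (Finset.mem_insert_self a H)) ((hC a hsum).2)

lemma exists_ordSumDeterminesMax_FS_subset (hlwc : ∀ a b : S, {x : S | a + x = b}.Finite)
    (hni : ∀ s : S, s + s ≠ s) {U : Ultrafilter S} (hU : U + U = U) {A : Set S} (hA : A ∈ U) :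
    ∃ y : ℕ → S, FS y ⊆ A ∧ OrdSumDeterminesMax y := by
  classical
  obtain ⟨C₀, hC₀A, hC₀⟩ := exists_isStarSet_subset hU hA
  -- A state `(C, E)` holds the star set from which the next term is picked and a finite set
  -- containing all sums of earlier terms.
  have step (q : {C // IsStarSet U C} × Finset S) :
      ∃ z ∈ q.1.1, z ∉ q.2 ∧ ∀ a ∈ q.2, a + z ∉ q.2 :=
    (U.infinite_of_mem_of_add_self hU hni q.1.2.1).exists_mem_forall_add_notMem hlwc q.2
  choose z hzC hzE using step
  let next (q : {C // IsStarSet U C} × Finset S) : {C // IsStarSet U C} × Finset S :=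
    (⟨q.1.1 ∩ (z q + ·) ⁻¹' q.1.1, q.1.2.inter_preimage (hzC q)⟩,
      q.2 ∪ insert (z q) (q.2.image (· + z q)))
  let Q (n : ℕ) := next^[n] (⟨C₀, hC₀⟩, ∅)
  have hQ (n : ℕ) : Q (n + 1) = next (Q n) := iterate_succ_apply' next n _
  let y (n : ℕ) := z (Q n)
  have hE (n : ℕ) : sumsBelow y n ⊆ (Q n).2 := by
    induction n with
    | zero =>
      rintro _ ⟨H, ⟨hH, hH0⟩, -⟩
      simp only [Finset.range_zero, Finset.subset_empty] at hH0
      exact absurd hH0 hH.ne_empty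
    | succ n ih =>
      refine (sumsBelow_succ_subset y n).trans ?_
      rw [hQ]
      simp only [next, Finset.coe_union, Finset.coe_insert, Finset.coe_image]
      exact Set.union_subset_union ih (Set.insert_subset_insert (Set.image_mono ih))
  have hyC : FS y ⊆ C₀ :=
    FS_subset_of_mem_of_succ_subset (C := fun n => (Q n).1.1) (fun n => hzC _) fun n => by rw [hQ]
  refine ⟨y, hyC.trans hC₀A,
    ordSumDeterminesMax_of_forall_notMem y (fun n hn => ?_) fun n a ha hay => ?_⟩
  exacts [(hzE (Q n)).1 (hE n hn), (hzE (Q n)).2 a (hE n ha) (hE n hay)]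

end Construction

section BranchSeq

/- `prefixCode α n` codes the node `α ∩ [0, n)` of the binary tree; the branches through `α ≠ β`
share only the nodes of depth at most the first point where `α` and `β` differ. -/
open scoped Classical in
noncomputable def prefixCode (α : Set ℕ) (n : ℕ) : ℕ :=
  Encodable.encode (n, (Finset.range n).filter (· ∈ α))

lemma prefixCode_injective (α : Set ℕ) : Injective (prefixCode α) := fun _ _ h =>
  congrArg Prod.fst (Encodable.encode_injective h)

lemma finite_range_prefixCode_inter {α β : Set ℕ} (h : α ≠ β) :
    (Set.range (prefixCode α) ∩ Set.range (prefixCode β)).Finite := by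
  obtain ⟨k, hk⟩ : ∃ k, ¬(k ∈ α ↔ k ∈ β) := by simpa [Set.ext_iff] using h
  refine ((Set.finite_Iic k).image (prefixCode α)).subset ?_
  rintro _ ⟨⟨n, rfl⟩, m, hmn⟩
  obtain ⟨hnm, hfilter⟩ := Prod.ext_iff.1 (Encodable.encode_injective hmn.symm)
  subst hnm
  refine ⟨n, Set.mem_Iic.2 (not_lt.1 fun hkn => hk ?_), rfl⟩
  simpa [hkn] using congrArg (k ∈ ·) hfilter

noncomputable def branchSeq (α : Set ℕ) : ℕ → ℕ := Nat.nth (· ∈ Set.range (prefixCode α))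

lemma branchSeq_strictMono (α : Set ℕ) : StrictMono (branchSeq α) :=
  Nat.nth_strictMono (Set.infinite_range_of_injective (prefixCode_injective α))

lemma range_branchSeq (α : Set ℕ) : Set.range (branchSeq α) = Set.range (prefixCode α) :=
  Nat.range_nth_of_infinite (Set.infinite_range_of_injective (prefixCode_injective α))

end BranchSeq

theorem stmt3_general {S : Type*} [AddSemigroup S]
    (hlwc : ∀ a b : S, {x : S | a + x = b}.Finite)
    (hni : ∀ s : S, s + s ≠ s)
    (A : Set S) (hA : IPSet A) :
    ∃ B : Set ℕ → Set S,
      Function.Injective B ∧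
      (∀ α, B α ⊆ A ∧ (B α).Countable ∧ (B α).Infinite ∧ IPSet (B α)) ∧
      (∀ α β, α ≠ β → (B α ∩ B β).Finite) := by
  obtain ⟨x, hx⟩ := hA
  obtain ⟨U, hU, hxU⟩ := Hindman.exists_idempotent_ultrafilter_le_FS (x : Stream' S)
  obtain ⟨y, hyA, hy⟩ := exists_ordSumDeterminesMax_FS_subset hlwc hni hU
    (mem_of_superset hxU ((hindmanFS_subset_FS x).trans hx))
  let B (α : Set ℕ) := FS (y ∘ branchSeq α)
  have hinf (α : Set ℕ) : (B α).Infinite :=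
    FS_infinite_of_injective _ (hy.injective.comp (branchSeq_strictMono α).injective)
  have hfin (α β : Set ℕ) (h : α ≠ β) : (B α ∩ B β).Finite :=
    hy.finite_FS_comp_inter (branchSeq_strictMono α) (branchSeq_strictMono β) <| by
      simpa only [range_branchSeq] using finite_range_prefixCode_inter h
  refine ⟨B, fun α β hαβ => ?_, fun α => ⟨(FS_comp_subset_of_strictMono y
    (branchSeq_strictMono α)).trans hyA, FS_countable _, hinf α, _, subset_rfl⟩, hfin⟩
  by_contra h
  exact hinf β (by simpa [hαβ] using hfin α β h)

/-- If `(S,+)` is an infinite left weakly cancellative semigroup with no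
idempotent and `A` is an IP set in `S`, then `A` contains a family of `2^ℵ₀` almost
disjoint countably infinite IP subsets (indexed here by `Set ℕ`, a type of
cardinality `2^ℵ₀`). -/
theorem stmt3 {S : Type*} [AddSemigroup S] [Infinite S]
    (hlwc : ∀ a b : S, {x : S | a + x = b}.Finite)
    (hni : ∀ s : S, s + s ≠ s)
    (A : Set S) (hA : IPSet A) :
    ∃ B : Set ℕ → Set S,
      Function.Injective B ∧
      (∀ α, B α ⊆ A ∧ (B α).Countable ∧ (B α).Infinite ∧ IPSet (B α)) ∧
      (∀ α β, α ≠ β → (B α ∩ B β).Finite) :=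
  stmt3_general hlwc hni A hA
end
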